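/- Let G^{ab}{}_{AB} satisfy conditions (G1)–(G3). Then (G4) holds: conj(w_a^A) G^{ab}{}_{AB} w_b^B > 0 whenever w_a^A = s_a η^A with s ∈ ℂ² nonzero and η ≠ 0 satisfying η^{&A} = 0 and conj(η^A) = η^{♯A}. -/
import Mathlib

set_option maxHeartbeats 2000000


/-- The antisymmetric epsilon symbol on `{0,1}` with `ε 0 1 = 1`. -/
def eps (a b : Fin 2) : ℂ := if a < b then 1 else if b < a then -1 else 0

/-- The Kronecker delta. -/
def kdelta (a b : Fin 2) : ℂ := if a = b then 1 else 0

/-- Capital index type: four coordinate indices plus quadruple spinor indices. -/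
abbrev Idx : Type := Fin 4 ⊕ (Fin 2 × Fin 2 × Fin 2 × Fin 2)

/-- Total symmetrizer of `k` spinor indices. -/
noncomputable def symk {k : ℕ} (up lo : Fin k → Fin 2) : ℂ :=
  (Nat.factorial k : ℂ)⁻¹ * ∑ π : Equiv.Perm (Fin k), ∏ i, kdelta (up i) (lo (π i))

/-- The projection `Π_{a₁…a_k}^{A b₁…b_k}{}_B`: zero if `A` or `B` is a coordinate index,
and otherwise given by
`Π_{a₁…a_k c₁c₂}^{c₃c₄ b₁…b_k d₁d₂}{}_{d₃d₄}
  = δ_{c₁}^{d₁} δ^{c₃}_{d₃} ε^{c₄e} ε_{d₄f} S^{b₁…b_k d₂ f}_{a₁…a_k c₂ e}`. -/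
noncomputable def PiProj {k : ℕ} (lo up : Fin k → Fin 2) (A B : Idx) : ℂ :=
  match A, B with
  | Sum.inr (c1, c2, c3, c4), Sum.inr (d1, d2, d3, d4) =>
      kdelta c1 d1 * kdelta c3 d3 *
        ∑ e : Fin 2, ∑ f : Fin 2, eps c4 e * eps d4 f *
          symk (Fin.snoc (Fin.snoc up d2) f) (Fin.snoc (Fin.snoc lo c2) e)
  | _, _ => 0

/-- The `♯` operation: swap the order within each spinor index pair. -/
def sharp : Idx → Idx
  | Sum.inl α => Sum.inl α
  | Sum.inr (i, j, k, l) => Sum.inr (j, i, l, k)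

/-- The `&` prefix: `f^{&A} = Π^A{}_B Π^{♯B}{}_{♯C} f^C`. -/
noncomputable def amp (f : Idx → ℂ) (A : Idx) : ℂ :=
  ∑ B : Idx, ∑ C : Idx,
    PiProj (k := 0) ![] ![] A B * PiProj (k := 0) ![] ![] (sharp B) (sharp C) * f C

/- ### Auxiliary lemmas -/


lemma perm2univ : (Finset.univ : Finset (Equiv.Perm (Fin 2))) = {1, Equiv.swap 0 1} := by decide

lemma symk2 (u0 u1 l0 l1 : Fin 2) :
    symk ![u0,u1] ![l0,l1] =
      (2 : ℂ)⁻¹ * (kdelta u0 l0 * kdelta u1 l1 + kdelta u0 l1 * kdelta u1 l0) := by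
  rw [symk, perm2univ]
  rw [Finset.sum_insert (by decide), Finset.sum_singleton]
  simp [Fin.prod_univ_two, Equiv.swap_apply_left, Equiv.swap_apply_right, Nat.factorial]

lemma perm3univ : (Finset.univ : Finset (Equiv.Perm (Fin 3))) =
    {1, Equiv.swap 0 1, Equiv.swap 0 2, Equiv.swap 1 2,
     Equiv.swap 0 1 * Equiv.swap 1 2, Equiv.swap 1 2 * Equiv.swap 0 1} := by decide

lemma symk3 (u0 u1 u2 l0 l1 l2 : Fin 2) :
    symk ![u0,u1,u2] ![l0,l1,l2] =
      (6 : ℂ)⁻¹ * (kdelta u0 l0 * kdelta u1 l1 * kdelta u2 l2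
        + kdelta u0 l1 * kdelta u1 l0 * kdelta u2 l2
        + kdelta u0 l2 * kdelta u1 l1 * kdelta u2 l0
        + kdelta u0 l0 * kdelta u1 l2 * kdelta u2 l1
        + kdelta u0 l1 * kdelta u1 l2 * kdelta u2 l0
        + kdelta u0 l2 * kdelta u1 l0 * kdelta u2 l1) := by
  rw [symk, perm3univ]
  rw [Finset.sum_insert (by decide), Finset.sum_insert (by decide),
    Finset.sum_insert (by decide), Finset.sum_insert (by decide),
    Finset.sum_insert (by decide), Finset.sum_singleton]
  have h1 : ((Equiv.swap (0:Fin 3) 1) 2) = 2 := by decide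
  have h2 : ((Equiv.swap (0:Fin 3) 2) 1) = 1 := by decide
  have h3 : ((Equiv.swap (1:Fin 3) 2) 0) = 0 := by decide
  have h4 : ((Equiv.swap (0:Fin 3) 1) ((Equiv.swap (1:Fin 3) 2) 0)) = 1 := by decide
  have h5 : ((Equiv.swap (1:Fin 3) 2) ((Equiv.swap (0:Fin 3) 1) 2)) = 1 := by decide
  have h6 : ((Equiv.swap (0:Fin 3) 1) ((Equiv.swap (1:Fin 3) 2) 1)) = 2 := by decide
  have h7 : ((Equiv.swap (1:Fin 3) 2) ((Equiv.swap (0:Fin 3) 1) 0)) = 2 := by decide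
  have h8 : ((Equiv.swap (1:Fin 3) 2) ((Equiv.swap (0:Fin 3) 1) 1)) = 0 := by decide
  have h9 : ((Equiv.swap (0:Fin 3) 1) ((Equiv.swap (1:Fin 3) 2) 2)) = 0 := by decide
  simp [Fin.prod_univ_three, Equiv.swap_apply_left, Equiv.swap_apply_right, Nat.factorial,
    h1, h2, h3, h4, h5, h6, h7, h8, h9]
  ring

lemma snoc0 (x : Fin 2) : (Fin.snoc (![] : Fin 0 → Fin 2) x) = ![x] := by
  funext i; fin_cases i; simp [Fin.snoc]

lemma snoc1 (x y : Fin 2) : (Fin.snoc (![x]) y) = ![x, y] := by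
  funext i; fin_cases i <;> simp [Fin.snoc]

lemma snoc2 (x y z : Fin 2) : (Fin.snoc (![x,y]) z) = ![x, y, z] := by
  funext i; fin_cases i <;> simp [Fin.snoc] <;> rfl

lemma Pi_inl_left {k : ℕ} (lo up : Fin k → Fin 2) (α : Fin 4) (B : Idx) :
    PiProj lo up (Sum.inl α) B = 0 := by cases B <;> rfl
lemma Pi_inl_right {k : ℕ} (lo up : Fin k → Fin 2) (A : Idx) (β : Fin 4) :
    PiProj lo up A (Sum.inl β) = 0 := by cases A <;> rfl

noncomputable def Qc (c2 c4 d2 d4 : Fin 2) : ℂ :=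
  (2:ℂ)⁻¹ * (kdelta c2 d2 * kdelta c4 d4 + eps c4 d2 * eps d4 c2)

noncomputable def Mc (a b c2 c4 d2 d4 : Fin 2) : ℂ :=
  (6:ℂ)⁻¹ * (kdelta a b * kdelta c2 d2 * kdelta c4 d4
    + kdelta a b * eps c4 d2 * eps d4 c2
    + kdelta b c2 * kdelta a d2 * kdelta c4 d4
    + kdelta b c2 * eps c4 d2 * eps d4 a
    + eps c4 b * eps d4 c2 * kdelta a d2
    + eps c4 b * eps d4 a * kdelta c2 d2)

lemma P0spin (c1 c2 c3 c4 d1 d2 d3 d4 : Fin 2) :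
    PiProj (k := 0) ![] ![] (Sum.inr (c1,c2,c3,c4)) (Sum.inr (d1,d2,d3,d4)) =
      kdelta c1 d1 * kdelta c3 d3 * Qc c2 c4 d2 d4 := by
  show kdelta c1 d1 * kdelta c3 d3 *
        (∑ e : Fin 2, ∑ f : Fin 2, eps c4 e * eps d4 f *
          symk (Fin.snoc (Fin.snoc ![] d2) f) (Fin.snoc (Fin.snoc ![] c2) e)) = _
  simp only [snoc0, snoc1, symk2, Fin.sum_univ_two]
  congr 1
  fin_cases c2 <;> fin_cases c4 <;> fin_cases d2 <;> fin_cases d4 <;>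
    norm_num [Qc, eps, kdelta]

lemma P1spin (a b c1 c2 c3 c4 d1 d2 d3 d4 : Fin 2) :
    PiProj ![a] ![b] (Sum.inr (c1,c2,c3,c4)) (Sum.inr (d1,d2,d3,d4)) =
      kdelta c1 d1 * kdelta c3 d3 * Mc a b c2 c4 d2 d4 := by
  show kdelta c1 d1 * kdelta c3 d3 *
        (∑ e : Fin 2, ∑ f : Fin 2, eps c4 e * eps d4 f *
          symk (Fin.snoc (Fin.snoc ![b] d2) f) (Fin.snoc (Fin.snoc ![a] c2) e)) = _
  simp only [snoc1, snoc2, symk3, Fin.sum_univ_two]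
  congr 1
  fin_cases a <;> fin_cases b <;> fin_cases c2 <;> fin_cases c4 <;> fin_cases d2 <;>
    fin_cases d4 <;> norm_num [Mc, eps, kdelta]

lemma QMc (a b c2 c4 d2 d4 : Fin 2) :
    Qc c2 c4 0 0 * Mc a b 0 0 d2 d4 + Qc c2 c4 0 1 * Mc a b 0 1 d2 d4
      + Qc c2 c4 1 0 * Mc a b 1 0 d2 d4 + Qc c2 c4 1 1 * Mc a b 1 1 d2 d4
      = Mc a b c2 c4 d2 d4 := by
  fin_cases a <;> fin_cases b <;> fin_cases c2 <;> fin_cases c4 <;> fin_cases d2 <;>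
    fin_cases d4 <;> norm_num [Qc, Mc, eps, kdelta]

/-- The key absorption identity: `Π₀ ∘ Π₁ = Π₁`. -/
lemma compP (a b : Fin 2) (A B : Idx) :
    ∑ X : Idx, PiProj (k := 0) ![] ![] A X * PiProj ![a] ![b] X B
      = PiProj ![a] ![b] A B := by
  obtain (α | ⟨c1,c2,c3,c4⟩) := A
  · simp [Pi_inl_left]
  obtain (β | ⟨d1,d2,d3,d4⟩) := B
  · simp [Pi_inl_right]
  rw [Fintype.sum_sum_type]
  simp only [Pi_inl_right, Pi_inl_left, zero_mul, mul_zero, Finset.sum_const_zero, zero_add,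
    Fintype.sum_prod_type, P0spin, P1spin, Fin.sum_univ_two]
  fin_cases c1 <;> fin_cases d1 <;> fin_cases c3 <;> fin_cases d3 <;>
    simp [kdelta] <;> linear_combination QMc a b c2 c4 d2 d4

lemma kdelta_conj (a b : Fin 2) : starRingEnd ℂ (kdelta a b) = kdelta a b := by
  unfold kdelta; split <;> simp

lemma eps_conj (a b : Fin 2) : starRingEnd ℂ (eps a b) = eps a b := by
  unfold eps; split <;> [simp; split <;> simp]

lemma P0_conj (A B : Idx) :
    starRingEnd ℂ (PiProj (k := 0) ![] ![] A B) = PiProj (k := 0) ![] ![] A B := by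
  obtain (α | ⟨c1,c2,c3,c4⟩) := A
  · simp [Pi_inl_left]
  obtain (β | ⟨d1,d2,d3,d4⟩) := B
  · simp [Pi_inl_right]
  simp [P0spin, Qc, kdelta_conj, eps_conj, map_mul, map_add, Complex.conj_ofNat]

lemma sharp_sharp (A : Idx) : sharp (sharp A) = A := by
  obtain (α | ⟨i,j,k,l⟩) := A <;> rfl

def sharpE : Equiv.Perm Idx := Function.Involutive.toPerm sharp sharp_sharp


/-- (G4): `conj(w_a^A) G^{ab}{}_{AB} w_b^B > 0` for `w_a^A = s_a η^A` with `s ≠ 0`,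
`η ≠ 0`, `η^{&A} = 0`, `conj(η^A) = η^{♯A}`, given (G1)–(G3). -/
theorem gauge_G4
    (G : Fin 2 → Fin 2 → Idx → Idx → ℂ)
    -- (G1): G^{ab}{}_{A&B} = 0 and conj(G^{ba}{}_{BA}) = G^{ab}{}_{AB}
    (hG1a : ∀ (a b : Fin 2) (A B : Idx),
      (∑ X : Idx, ∑ Y : Idx, G a b A X * PiProj (k := 0) ![] ![] X Y
        * PiProj (k := 0) ![] ![] (sharp Y) (sharp B)) = 0)
    (hG1b : ∀ (a b : Fin 2) (A B : Idx), starRingEnd ℂ (G b a B A) = G a b A B)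
    -- (G2): G^{ab}{}_{AB} Π_b^{Bc}{}_C = 0
    (hG2 : ∀ (a c : Fin 2) (A C : Idx),
      (∑ b : Fin 2, ∑ B : Idx, G a b A B * PiProj ![b] ![c] B C) = 0)
    -- (G3): positivity, with the stated equality case
    (hG3pos : ∀ v : Fin 2 → Idx → ℂ,
      0 ≤ (∑ a : Fin 2, ∑ b : Fin 2, ∑ A : Idx, ∑ B : Idx,
        starRingEnd ℂ (v a A) * G a b A B * v b B).re)
    (hG3eq : ∀ v : Fin 2 → Idx → ℂ, (∀ (b : Fin 2) (B : Idx), amp (v b) B = 0) →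
      ((∑ a : Fin 2, ∑ b : Fin 2, ∑ A : Idx, ∑ B : Idx,
          starRingEnd ℂ (v a A) * G a b A B * v b B) = 0 ↔
        ∀ (a : Fin 2) (A : Idx),
          (∑ b : Fin 2, ∑ B : Idx, PiProj ![a] ![b] A B * v b B) = v a A))
    (s : Fin 2 → ℂ) (hs : s ≠ 0)
    (η : Idx → ℂ) (hη : η ≠ 0)
    (hηamp : ∀ A : Idx, amp η A = 0)
    (hηreal : ∀ A : Idx, starRingEnd ℂ (η A) = η (sharp A)) :
    0 < (∑ a : Fin 2, ∑ b : Fin 2, ∑ A : Idx, ∑ B : Idx,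
      starRingEnd ℂ (s a * η A) * G a b A B * (s b * η B)).re := by
  set v : Fin 2 → Idx → ℂ := fun a A => s a * η A with hv
  set S : ℂ := ∑ a : Fin 2, ∑ b : Fin 2, ∑ A : Idx, ∑ B : Idx,
      starRingEnd ℂ (v a A) * G a b A B * v b B with hS
  by_contra hcon
  push_neg at hcon
  have hre : S.re = 0 := le_antisymm hcon (hG3pos v)
  -- S is real
  have hconj : starRingEnd ℂ S = S := by
    rw [hS]
    simp only [map_sum, map_mul, RingHom.map_mul]
    calc ∑ a : Fin 2, ∑ b : Fin 2, ∑ A : Idx, ∑ B : Idx,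
          starRingEnd ℂ (starRingEnd ℂ (v a A)) * starRingEnd ℂ (G a b A B)
            * starRingEnd ℂ (v b B)
        = ∑ a : Fin 2, ∑ b : Fin 2, ∑ A : Idx, ∑ B : Idx,
          starRingEnd ℂ (v b B) * G b a B A * v a A := by
          refine Finset.sum_congr rfl fun a _ => Finset.sum_congr rfl fun b _ =>
            Finset.sum_congr rfl fun A _ => Finset.sum_congr rfl fun B _ => ?_
          rw [Complex.conj_conj, hG1b b a B A]
          ring
      _ = ∑ b : Fin 2, ∑ a : Fin 2, ∑ A : Idx, ∑ B : Idx,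
          starRingEnd ℂ (v b B) * G b a B A * v a A := Finset.sum_comm
      _ = ∑ b : Fin 2, ∑ a : Fin 2, ∑ B : Idx, ∑ A : Idx,
          starRingEnd ℂ (v b B) * G b a B A * v a A := by
          exact Finset.sum_congr rfl fun b _ => Finset.sum_congr rfl fun a _ => Finset.sum_comm
      _ = S := rfl
  have hS0 : S = 0 := by
    have him : S.im = 0 := Complex.conj_eq_iff_im.mp hconj
    exact Complex.ext hre him
  -- amp of v vanishes
  have hampv : ∀ (b : Fin 2) (B : Idx), amp (v b) B = 0 := by
    intro b B
    have : amp (v b) B = s b * amp η B := by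
      simp only [amp, hv, Finset.mul_sum]
      exact Finset.sum_congr rfl fun X _ => Finset.sum_congr rfl fun C _ => by ring
    rw [this, hηamp, mul_zero]
  -- the fixed-point equation
  have hE : ∀ (a : Fin 2) (A : Idx),
      (∑ b : Fin 2, ∑ B : Idx, PiProj ![a] ![b] A B * v b B) = v a A :=
    (hG3eq v hampv).mp hS0
  -- extract a component with s a ≠ 0
  obtain ⟨a0, ha0⟩ : ∃ a, s a ≠ 0 := by
    by_contra hc
    push_neg at hc
    exact hs (funext fun a => hc a)
  -- Π₀ η = η
  have hP : ∀ A : Idx, (∑ B : Idx, PiProj (k := 0) ![] ![] A B * η B) = η A := by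
    intro A
    have key : s a0 * (∑ B : Idx, PiProj (k := 0) ![] ![] A B * η B) = s a0 * η A := by
      calc s a0 * ∑ B : Idx, PiProj (k := 0) ![] ![] A B * η B
          = ∑ X : Idx, PiProj (k := 0) ![] ![] A X * v a0 X := by
            rw [Finset.mul_sum]
            exact Finset.sum_congr rfl fun X _ => by simp only [hv]; ring
        _ = ∑ X : Idx, PiProj (k := 0) ![] ![] A X
              * (∑ b : Fin 2, ∑ B : Idx, PiProj ![a0] ![b] X B * v b B) := by
            exact Finset.sum_congr rfl fun X _ => by rw [hE a0 X]
        _ = ∑ X : Idx, ∑ b : Fin 2, ∑ B : Idx,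
              PiProj (k := 0) ![] ![] A X * (PiProj ![a0] ![b] X B * v b B) := by
            exact Finset.sum_congr rfl fun X _ => by
              rw [Finset.mul_sum]
              exact Finset.sum_congr rfl fun b _ => by rw [Finset.mul_sum]
        _ = ∑ b : Fin 2, ∑ B : Idx, ∑ X : Idx,
              PiProj (k := 0) ![] ![] A X * (PiProj ![a0] ![b] X B * v b B) := by
            rw [Finset.sum_comm]
            exact Finset.sum_congr rfl fun b _ => Finset.sum_comm
        _ = ∑ b : Fin 2, ∑ B : Idx,
              (∑ X : Idx, PiProj (k := 0) ![] ![] A X * PiProj ![a0] ![b] X B) * v b B := by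
            refine Finset.sum_congr rfl fun b _ => Finset.sum_congr rfl fun B _ => ?_
            rw [Finset.sum_mul]
            exact Finset.sum_congr rfl fun X _ => by ring
        _ = ∑ b : Fin 2, ∑ B : Idx, PiProj ![a0] ![b] A B * v b B := by
            refine Finset.sum_congr rfl fun b _ => Finset.sum_congr rfl fun B _ => ?_
            rw [compP]
        _ = v a0 A := hE a0 A
        _ = s a0 * η A := rfl
    exact mul_left_cancel₀ ha0 key
  -- the sharped version
  have hPs : ∀ A : Idx,
      (∑ B : Idx, PiProj (k := 0) ![] ![] (sharp A) (sharp B) * η B) = η A := by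
    intro A
    have h1 := congrArg (starRingEnd ℂ) (hP (sharp A))
    rw [map_sum] at h1
    have h2 : ∑ B : Idx, PiProj (k := 0) ![] ![] (sharp A) B * η (sharp B)
        = η (sharp (sharp A)) := by
      rw [← hηreal]
      rw [← h1]
      exact Finset.sum_congr rfl fun B _ => by
        rw [map_mul, P0_conj, hηreal]
    rw [sharp_sharp] at h2
    calc ∑ B : Idx, PiProj (k := 0) ![] ![] (sharp A) (sharp B) * η B
        = ∑ B : Idx, PiProj (k := 0) ![] ![] (sharp A) (sharp B) * η (sharp (sharp B)) := by
          exact Finset.sum_congr rfl fun B _ => by rw [sharp_sharp]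
      _ = ∑ B : Idx, PiProj (k := 0) ![] ![] (sharp A) B * η (sharp B) := by
          exact (Equiv.sum_comp sharpE
            (fun B => PiProj (k := 0) ![] ![] (sharp A) B * η (sharp B)))
      _ = η A := h2
  -- conclude η = 0
  have hzero : η = 0 := by
    funext A
    have : amp η A = η A := by
      calc amp η A
          = ∑ B : Idx, PiProj (k := 0) ![] ![] A B
              * (∑ C : Idx, PiProj (k := 0) ![] ![] (sharp B) (sharp C) * η C) := by
            rw [amp]
            exact Finset.sum_congr rfl fun B _ => by
              rw [Finset.mul_sum]
              exact Finset.sum_congr rfl fun C _ => by ring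
        _ = ∑ B : Idx, PiProj (k := 0) ![] ![] A B * η B := by
            exact Finset.sum_congr rfl fun B _ => by rw [hPs B]
        _ = η A := hP A
    rw [hηamp A] at this
    exact this.symm
  exact hη hzero
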